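/- Let (Ω, μ) be a probability space with a measurable map ω ↦ (X(ω), Y(ω)) into a measurable space 𝒳 × 𝒴. Let E be a normed real vector space, let g : 𝒳 × ℝ^D → E be such that for every x ∈ 𝒳 the map θ ↦ g(x, θ) is Lipschitz with constant L_g, let ℓ : E × 𝒴 → ℝ be such that for every y ∈ 𝒴 the map u ↦ ℓ(u, y) is Lipschitz with constant L_ℓ, and let φ⁻¹ : ℝ^m → ℝ^D be Lipschitz with constant L_dec. Let K = V Λ V⁻¹ be an m×m real matrix with V invertible and Λ diagonal with all diagonal entries of absolute value at most ρ. Suppose ẑ_low = K^h ŵ and z*_low = K^h w* for some ŵ, w* ∈ ℝ^m and natural number h, and let ẑ_high, z*_high ∈ ℝ^m. Set θ̂ = φ⁻¹(ẑ_low + ẑ_high) and θ* = φ⁻¹(z*_low + z*_high), and assume ω ↦ ℓ(g(X(ω), θ̂), Y(ω)) and ω ↦ ℓ(g(X(ω), θ*), Y(ω)) are integrable with respect to μ. Then E_μ[ℓ(g(X, θ̂), Y)] − E_μ[ℓ(g(X, θ*), Y)] ≤ L_ℓ · L_g · L_dec · (‖V‖ · ‖V⁻¹‖ · ρ^h ·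 ‖ŵ − w*‖ + ‖ẑ_high − z*_high‖). -/
import Mathlib

open MeasureTheory

lemma diag_clm_norm_le {m : ℕ} (e : Fin m → ℝ) (c : ℝ) (hc : 0 ≤ c)
    (he : ∀ i, |e i| ≤ c) :
    ‖Matrix.toEuclideanCLM (𝕜 := ℝ) (Matrix.diagonal e)‖ ≤ c := by
  apply ContinuousLinearMap.opNorm_le_bound _ hc
  intro z
  have hz : ∀ i, (Matrix.toEuclideanCLM (𝕜 := ℝ) (Matrix.diagonal e) z) i = e i * z i := by
    intro i
    have := Matrix.ofLp_toEuclideanCLM (𝕜 := ℝ) (Matrix.diagonal e) z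
    have h2 := congrFun this i
    simpa [Matrix.toLin'_apply, Matrix.mulVec_diagonal] using h2
  rw [EuclideanSpace.norm_eq, EuclideanSpace.norm_eq]
  rw [← Real.sqrt_sq hc, ← Real.sqrt_mul (by positivity)]
  apply Real.sqrt_le_sqrt
  rw [Finset.mul_sum]
  apply Finset.sum_le_sum
  intro i _
  rw [hz i]
  have : ‖e i * z i‖ ^ 2 = (e i)^2 * ‖z i‖^2 := by
    rw [norm_mul, mul_pow]; simp [Real.norm_eq_abs, sq_abs]
  rw [this]
  apply mul_le_mul_of_nonneg_right _ (by positivity)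
  calc (e i)^2 = |e i|^2 := (sq_abs _).symm
  _ ≤ c^2 := pow_le_pow_left₀ (abs_nonneg _) (he i) 2

lemma myConj_pow {m : ℕ} (V Λ : Matrix (Fin m) (Fin m) ℝ) (hV : IsUnit V) (h : ℕ) :
    (V * Λ * V⁻¹) ^ h = V * Λ ^ h * V⁻¹ := by
  have hVd : IsUnit V.det := (Matrix.isUnit_iff_isUnit_det V).mp hV
  induction h with
  | zero => simp [Matrix.mul_nonsing_inv V hVd]
  | succ k ih =>
      rw [pow_succ, pow_succ, ih]
      rw [show V * Λ ^ k * V⁻¹ * (V * Λ * V⁻¹) =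
        V * Λ ^ k * (V⁻¹ * V) * Λ * V⁻¹ by noncomm_ring,
        Matrix.nonsing_inv_mul V hVd, mul_one]
      noncomm_ring

/-- Combination of the parameter-prediction-error term of the multiscale generalization bound
with the diagonalizable case of the Koopman stability lemma: when the low-frequency latent is
extrapolated `h` steps by a stable diagonalizable Koopman operator `K = V Λ V⁻¹` (eigenvalues
of modulus at most `ρ`), the excess target-domain risk is bounded by
`Lℓ · Lg · L_dec · (‖V‖ ‖V⁻¹‖ ρ^h ‖ŵ - w*‖ + ‖ẑ_high - z*_high‖)`. -/
theorem excess_risk_le_koopman_latent_errors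
    {Ω : Type*} [MeasurableSpace Ω] (μ : Measure Ω) [IsProbabilityMeasure μ]
    {𝒳 𝒴 : Type*} [MeasurableSpace 𝒳] [MeasurableSpace 𝒴]
    (X : Ω → 𝒳) (Y : Ω → 𝒴) (hXY : Measurable fun ω => (X ω, Y ω))
    {E : Type*} [NormedAddCommGroup E] [NormedSpace ℝ E]
    {D m : ℕ} (g : 𝒳 → EuclideanSpace ℝ (Fin D) → E) (Lg : NNReal)
    (hg : ∀ x, LipschitzWith Lg (g x))
    (l : E → 𝒴 → ℝ) (Lℓ : NNReal) (hl : ∀ y, LipschitzWith Lℓ fun u => l u y)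
    (φinv : EuclideanSpace ℝ (Fin m) → EuclideanSpace ℝ (Fin D)) (Ldec : NNReal)
    (hφinv : LipschitzWith Ldec φinv)
    (K V Λ : Matrix (Fin m) (Fin m) ℝ) (d : Fin m → ℝ) (ρ : ℝ)
    (hV : IsUnit V) (hΛ : Λ = Matrix.diagonal d) (hd : ∀ i, |d i| ≤ ρ)
    (hK : K = V * Λ * V⁻¹) (h : ℕ)
    (what wstar zhatLow zhatHigh zstarLow zstarHigh : EuclideanSpace ℝ (Fin m))
    (hzhatLow : zhatLow = Matrix.toEuclideanCLM (𝕜 := ℝ) (K ^ h) what)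
    (hzstarLow : zstarLow = Matrix.toEuclideanCLM (𝕜 := ℝ) (K ^ h) wstar)
    (θhat θstar : EuclideanSpace ℝ (Fin D))
    (hθhat : θhat = φinv (zhatLow + zhatHigh)) (hθstar : θstar = φinv (zstarLow + zstarHigh))
    (hint : Integrable (fun ω => l (g (X ω) θhat) (Y ω)) μ)
    (hint' : Integrable (fun ω => l (g (X ω) θstar) (Y ω)) μ) :
    (∫ ω, l (g (X ω) θhat) (Y ω) ∂μ) - (∫ ω, l (g (X ω) θstar) (Y ω) ∂μ) ≤
      (Lℓ : ℝ) * (Lg : ℝ) * (Ldec : ℝ) *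
        (‖Matrix.toEuclideanCLM (𝕜 := ℝ) V‖ * ‖Matrix.toEuclideanCLM (𝕜 := ℝ) V⁻¹‖ *
            ρ ^ h * ‖what - wstar‖ + ‖zhatHigh - zstarHigh‖) := by
  rcases Nat.eq_zero_or_pos m with hm | hm
  · -- m = 0 : everything trivial
    subst hm
    haveI hsub : Subsingleton (EuclideanSpace ℝ (Fin 0)) := by
      constructor; intro a b; ext i; exact absurd i.2 (by omega)
    have : θhat = θstar := by
      rw [hθhat, hθstar, Subsingleton.elim (zhatLow + zhatHigh) (zstarLow + zstarHigh)]
    have h1 : what - wstar = 0 := Subsingleton.elim _ _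
    have h2 : zhatHigh - zstarHigh = 0 := Subsingleton.elim _ _
    rw [this, sub_self, h1, h2, norm_zero, mul_zero, add_zero, mul_zero]
  · -- m > 0 : ρ ≥ 0
    have hρ : 0 ≤ ρ := le_trans (abs_nonneg _) (hd ⟨0, hm⟩)
    -- bound on ‖K^h‖ as CLM
    have hKh : K ^ h = V * Λ ^ h * V⁻¹ := by rw [hK, myConj_pow V Λ hV h]
    have hΛh : ‖Matrix.toEuclideanCLM (𝕜 := ℝ) (Λ ^ h)‖ ≤ ρ ^ h := by
      rw [hΛ, Matrix.diagonal_pow]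
      exact diag_clm_norm_le _ _ (by positivity) fun i => by
        rw [Pi.pow_apply, abs_pow]
        exact pow_le_pow_left₀ (abs_nonneg _) (hd i) h
    have hnorm : ‖Matrix.toEuclideanCLM (𝕜 := ℝ) (K ^ h)‖ ≤
        ‖Matrix.toEuclideanCLM (𝕜 := ℝ) V‖ * ‖Matrix.toEuclideanCLM (𝕜 := ℝ) V⁻¹‖ * ρ ^ h := by
      rw [hKh, map_mul, map_mul]
      calc ‖Matrix.toEuclideanCLM (𝕜 := ℝ) V * Matrix.toEuclideanCLM (𝕜 := ℝ) (Λ ^ h) *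
              Matrix.toEuclideanCLM (𝕜 := ℝ) V⁻¹‖
          ≤ ‖Matrix.toEuclideanCLM (𝕜 := ℝ) V‖ * ‖Matrix.toEuclideanCLM (𝕜 := ℝ) (Λ ^ h)‖ *
              ‖Matrix.toEuclideanCLM (𝕜 := ℝ) V⁻¹‖ :=
            le_trans (norm_mul_le _ _) (by gcongr; exact norm_mul_le _ _)
        _ ≤ ‖Matrix.toEuclideanCLM (𝕜 := ℝ) V‖ * ρ ^ h * ‖Matrix.toEuclideanCLM (𝕜 := ℝ) V⁻¹‖ := by
            gcongr
        _ = _ := by ring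
    -- low-frequency latent error
    have hlow : ‖zhatLow - zstarLow‖ ≤
        ‖Matrix.toEuclideanCLM (𝕜 := ℝ) V‖ * ‖Matrix.toEuclideanCLM (𝕜 := ℝ) V⁻¹‖ *
          ρ ^ h * ‖what - wstar‖ := by
      rw [hzhatLow, hzstarLow, ← map_sub]
      calc ‖Matrix.toEuclideanCLM (𝕜 := ℝ) (K ^ h) (what - wstar)‖
          ≤ ‖Matrix.toEuclideanCLM (𝕜 := ℝ) (K ^ h)‖ * ‖what - wstar‖ :=
            ContinuousLinearMap.le_opNorm _ _
        _ ≤ _ := by gcongr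
    -- pointwise bound
    set C : ℝ := (Lℓ : ℝ) * (Lg : ℝ) * (Ldec : ℝ) *
        (‖Matrix.toEuclideanCLM (𝕜 := ℝ) V‖ * ‖Matrix.toEuclideanCLM (𝕜 := ℝ) V⁻¹‖ *
            ρ ^ h * ‖what - wstar‖ + ‖zhatHigh - zstarHigh‖) with hC
    have hθ : ‖θhat - θstar‖ ≤ (Ldec : ℝ) *
        (‖Matrix.toEuclideanCLM (𝕜 := ℝ) V‖ * ‖Matrix.toEuclideanCLM (𝕜 := ℝ) V⁻¹‖ *
            ρ ^ h * ‖what - wstar‖ + ‖zhatHigh - zstarHigh‖) := by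
      rw [hθhat, hθstar]
      calc ‖φinv (zhatLow + zhatHigh) - φinv (zstarLow + zstarHigh)‖
          ≤ (Ldec : ℝ) * ‖(zhatLow + zhatHigh) - (zstarLow + zstarHigh)‖ := by
            simpa [dist_eq_norm] using hφinv.dist_le_mul (zhatLow + zhatHigh)
              (zstarLow + zstarHigh)
        _ ≤ (Ldec : ℝ) * (‖zhatLow - zstarLow‖ + ‖zhatHigh - zstarHigh‖) := by
            gcongr
            calc ‖(zhatLow + zhatHigh) - (zstarLow + zstarHigh)‖
                = ‖(zhatLow - zstarLow) + (zhatHigh - zstarHigh)‖ := by congr 1; abel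
              _ ≤ _ := norm_add_le _ _
        _ ≤ _ := by gcongr
    have hpt : ∀ ω, l (g (X ω) θhat) (Y ω) - l (g (X ω) θstar) (Y ω) ≤ C := by
      intro ω
      calc l (g (X ω) θhat) (Y ω) - l (g (X ω) θstar) (Y ω)
          ≤ |l (g (X ω) θhat) (Y ω) - l (g (X ω) θstar) (Y ω)| := le_abs_self _
        _ ≤ (Lℓ : ℝ) * ‖g (X ω) θhat - g (X ω) θstar‖ := by
            simpa [Real.dist_eq, dist_eq_norm] using (hl (Y ω)).dist_le_mul
              (g (X ω) θhat) (g (X ω) θstar)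
        _ ≤ (Lℓ : ℝ) * ((Lg : ℝ) * ‖θhat - θstar‖) := by
            gcongr
            simpa [dist_eq_norm] using (hg (X ω)).dist_le_mul θhat θstar
        _ ≤ (Lℓ : ℝ) * ((Lg : ℝ) * ((Ldec : ℝ) *
            (‖Matrix.toEuclideanCLM (𝕜 := ℝ) V‖ * ‖Matrix.toEuclideanCLM (𝕜 := ℝ) V⁻¹‖ *
              ρ ^ h * ‖what - wstar‖ + ‖zhatHigh - zstarHigh‖))) := by gcongr
        _ = C := by rw [hC]; ring
    calc (∫ ω, l (g (X ω) θhat) (Y ω) ∂μ) - (∫ ω, l (g (X ω) θstar) (Y ω) ∂μ)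
        = ∫ ω, (l (g (X ω) θhat) (Y ω) - l (g (X ω) θstar) (Y ω)) ∂μ :=
          (integral_sub hint hint').symm
      _ ≤ ∫ _ω, C ∂μ := integral_mono (hint.sub hint') (integrable_const C) hpt
      _ = C := by simp
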